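/- Let Λ be a finitely aligned category of paths, v a vertex, R a generalized Boolean algebra, and μ : vΛ → R. Then there exists a Boolean ring homomorphism μ̄ : 𝒜_v → R with μ̄(αΛ) = μ(α) for all α ∈ vΛ if and only if μ(α) ⊓ μ(β) = ⨆_{ε ∈ α∨β} μ(ε) for all α, β ∈ vΛ (the supremum over the finite set α ∨ β, equal to ⊥ when α ∨ β = ∅). In this case μ̄ is unique. -/

import Mathlib

universe u v

/-- A category of paths: a small category (objects identified with identity
morphisms) with left and right cancellation and no inverses. -/
structure CategoryOfPaths (Λ : Type u) where
  s : Λ → Λ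
  r : Λ → Λ
  comp : Λ → Λ → Λ
  s_comp : ∀ {α β : Λ}, s α = r β → s (comp α β) = s β
  r_comp : ∀ {α β : Λ}, s α = r β → r (comp α β) = r α
  comp_assoc : ∀ {α β γ : Λ}, s α = r β → s β = r γ →
    comp (comp α β) γ = comp α (comp β γ)
  id_comp : ∀ α : Λ, comp (r α) α = α
  comp_id : ∀ α : Λ, comp α (s α) = α
  s_r : ∀ α : Λ, s (r α) = r α
  r_r : ∀ α : Λ, r (r α) = r α
  r_s : ∀ α : Λ, r (s α) = s α
  s_s : ∀ α : Λ, s (s α) = s α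
  left_cancel : ∀ {α β γ : Λ}, s α = r β → s α = r γ → comp α β = comp α γ → β = γ
  right_cancel : ∀ {β γ α : Λ}, s β = r α → s γ = r α → comp β α = comp γ α → β = γ
  no_inverses : ∀ {α β : Λ}, s α = r β → comp α β = s β → α = s β ∧ β = s β

variable {Λ : Type u}

/-- The tail set `αΛ`. -/
def pTail (C : CategoryOfPaths Λ) (α : Λ) : Set Λ :=
  {x | ∃ β, C.s α = C.r β ∧ x = C.comp α β}

/-- `vΛ`, the paths with range `v`. -/
def pRng (C : CategoryOfPaths Λ) (w : Λ) : Set Λ := {α | C.r α = w}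

/-- `Λv`, the paths with source `v`. -/
def pSrc (C : CategoryOfPaths Λ) (w : Λ) : Set Λ := {α | C.s α = w}

/-- `[β]`, the initial segments of `β`. -/
def pSeg (C : CategoryOfPaths Λ) (β : Λ) : Set Λ := {α | β ∈ pTail C α}

/-- `α ⋔ β`. -/
def pMeets (C : CategoryOfPaths Λ) (α β : Λ) : Prop :=
  (pTail C α ∩ pTail C β).Nonempty

/-- `αE`. -/
def pMulSet (C : CategoryOfPaths Λ) (α : Λ) (E : Set Λ) : Set Λ :=
  {x | ∃ β ∈ E, C.s α = C.r β ∧ x = C.comp α β}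

/-- `σ^α(E ∩ αΛ)`, computed inside an ambient subcategory `S`. -/
def pShiftIn (C : CategoryOfPaths Λ) (S : Set Λ) (α : Λ) (E : Set Λ) : Set Λ :=
  {β | β ∈ S ∧ C.s α = C.r β ∧ C.comp α β ∈ E}

/-- `σ^α(E ∩ αΛ)`. -/
def pShift (C : CategoryOfPaths Λ) (α : Λ) (E : Set Λ) : Set Λ :=
  {β | C.s α = C.r β ∧ C.comp α β ∈ E}

/-- `⋁F`: the minimal common extensions of `F`. -/
def pMinExt (C : CategoryOfPaths Λ) (F : Set Λ) : Set Λ :=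
  {ε | (∀ α ∈ F, ε ∈ pTail C α) ∧
    ∀ γ, (∀ α ∈ F, γ ∈ pTail C α) → ε ∈ pTail C γ → γ = ε}

/-- `α ∨ β`: the minimal common extensions of `α` and `β`. -/
def pMinCE (C : CategoryOfPaths Λ) (α β : Λ) : Set Λ := pMinExt C {α, β}

/-- A subcategory of a category of paths, as a set of morphisms. -/
structure IsSubcategory (C : CategoryOfPaths Λ) (Λ₀ : Set Λ) : Prop where
  comp_mem : ∀ {α β : Λ}, α ∈ Λ₀ → β ∈ Λ₀ → C.s α = C.r β → C.comp α β ∈ Λ₀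
  s_mem : ∀ {α : Λ}, α ∈ Λ₀ → C.s α ∈ Λ₀
  r_mem : ∀ {α : Λ}, α ∈ Λ₀ → C.r α ∈ Λ₀

/-- A finitely aligned category of paths. -/
def FinitelyAligned (C : CategoryOfPaths Λ) : Prop :=
  ∀ α β : Λ, ∃ G : Set Λ, G.Finite ∧
    pTail C α ∩ pTail C β = ⋃ ε ∈ G, pTail C ε

/-- A finitely aligned relative category of paths `(Λ₀, Λ)`. -/
def RelFinitelyAligned (C : CategoryOfPaths Λ) (Λ₀ : Set Λ) : Prop :=
  (∀ α ∈ Λ₀, ∀ β ∈ Λ₀, ∃ G : Set Λ, G.Finite ∧ G ⊆ Λ₀ ∧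
      pTail C α ∩ pTail C β = ⋃ ε ∈ G, pTail C ε) ∧
  (∀ α ∈ Λ₀, pTail C α ∩ Λ₀ = pMulSet C α Λ₀)

/-- A ring of sets: contains `∅` and is closed under `∪`, `∩`, and `\`. -/
def IsSetRing {γ : Type v} (R : Set (Set γ)) : Prop :=
  ∅ ∈ R ∧ (∀ E ∈ R, ∀ F ∈ R, E ∪ F ∈ R) ∧ (∀ E ∈ R, ∀ F ∈ R, E ∩ F ∈ R) ∧
    (∀ E ∈ R, ∀ F ∈ R, E \ F ∈ R)

/-- A ring of sets on `S`: a ring of sets all of whose members are subsets of `S`. -/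
def IsSetRingOn {γ : Type v} (S : Set γ) (R : Set (Set γ)) : Prop :=
  IsSetRing R ∧ ∀ E ∈ R, E ⊆ S

/-- The ring of sets generated by a collection. -/
def setRingGen {γ : Type v} (G : Set (Set γ)) : Set (Set γ) :=
  ⋂₀ {R | IsSetRing R ∧ G ⊆ R}

/-- The ring of sets on `S` generated by a collection. -/
def setRingGenOn {γ : Type v} (S : Set γ) (G : Set (Set γ)) : Set (Set γ) :=
  ⋂₀ {R | IsSetRingOn S R ∧ G ⊆ R}

/-- A zigzag: a list of pairs `(αᵢ, βᵢ)` with `r αᵢ = r βᵢ` and `s αᵢ₊₁ = s βᵢ`. -/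
def IsZigzag (C : CategoryOfPaths Λ) (l : List (Λ × Λ)) : Prop :=
  (∀ p ∈ l, C.r p.1 = C.r p.2) ∧ l.Chain' (fun p q => C.s q.1 = C.s p.2)

/-- The (graph of the) zigzag map `φ_ζ = σ^{α₁} β₁ ⋯ σ^{αₙ} βₙ`, computed
inside an ambient subcategory `S`. -/
def zigzagRelIn (C : CategoryOfPaths Λ) (S : Set Λ) : List (Λ × Λ) → Λ → Λ → Prop
  | [], x, y => x = y ∧ x ∈ S
  | p :: rest, x, y => ∃ z, zigzagRelIn C S rest x z ∧ C.s p.2 = C.r z ∧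
      C.s p.1 = C.r y ∧ y ∈ S ∧ C.comp p.2 z = C.comp p.1 y

/-- `A(ζ)`: the domain of the zigzag map. -/
def zigzagDomIn (C : CategoryOfPaths Λ) (S : Set Λ) (l : List (Λ × Λ)) : Set Λ :=
  {x | ∃ y, zigzagRelIn C S l x y}

/-- `𝒟(Λ₀,Λ)⁰_v`: nonempty zigzag sets with entries in `Λ₀` and source `v`,
computed inside the ambient subcategory `S`. -/
def relD0 (C : CategoryOfPaths Λ) (Λ₀ S : Set Λ) (w : Λ) : Set (Set Λ) :=
  {E | E.Nonempty ∧ ∃ (l : List (Λ × Λ)) (h : l ≠ []),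
    IsZigzag C l ∧ (∀ p ∈ l, p.1 ∈ Λ₀ ∧ p.2 ∈ Λ₀) ∧
    C.s (l.getLast h).2 = w ∧ E = zigzagDomIn C S l}

/-- `𝒜(Λ₀,Λ)_v`: the ring of sets generated by the zigzag sets. -/
def relAring (C : CategoryOfPaths Λ) (Λ₀ S : Set Λ) (w : Λ) : Set (Set Λ) :=
  setRingGenOn {α | α ∈ S ∧ C.r α = w} (relD0 C Λ₀ S w)

/-- A filter in a ring of sets. -/
def IsFilterIn {γ : Type v} (R U : Set (Set γ)) : Prop :=
  U.Nonempty ∧ U ⊆ R ∧ (∀ E ∈ U, E.Nonempty) ∧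
    (∀ E ∈ U, ∀ F ∈ U, E ∩ F ∈ U) ∧ (∀ E ∈ U, ∀ F ∈ R, E ⊆ F → F ∈ U)

/-- An ultrafilter in a ring of sets: a maximal filter. -/
def IsUltrafilterIn {γ : Type v} (R U : Set (Set γ)) : Prop :=
  IsFilterIn R U ∧ ∀ V, IsFilterIn R V → U ⊆ V → V = U

/-- A filter base in a ring of sets. -/
def IsFilterBaseIn {γ : Type v} (R B : Set (Set γ)) : Prop :=
  B.Nonempty ∧ B ⊆ R ∧ (∀ E ∈ B, E.Nonempty) ∧
    ∀ E ∈ B, ∀ F ∈ B, ∃ G ∈ B, G ⊆ E ∩ F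

/-- The filter generated by a filter base. -/
def filterGenBy {γ : Type v} (R B : Set (Set γ)) : Set (Set γ) :=
  {E | E ∈ R ∧ ∃ F ∈ B, F ⊆ E}

/-- An ultrafilter base in a ring of sets. -/
def IsUltrafilterBaseIn {γ : Type v} (R B : Set (Set γ)) : Prop :=
  IsFilterBaseIn R B ∧ IsUltrafilterIn R (filterGenBy R B)

/-- A Boolean ring homomorphism defined on a ring of sets `A` with values in a
generalized Boolean algebra. -/
def IsBRHomOn {γ : Type v} {R : Type*} [GeneralizedBooleanAlgebra R]
    (A : Set (Set γ)) (ν : Set γ → R) : Prop :=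
  ν ∅ = ⊥ ∧ (∀ E ∈ A, ∀ F ∈ A, ν (E ∪ F) = ν E ⊔ ν F) ∧
    (∀ E ∈ A, ∀ F ∈ A, ν (E ∩ F) = ν E ⊓ ν F) ∧
    (∀ E ∈ A, ∀ F ∈ A, ν (E \ F) = ν E \ ν F)

/-- `𝒜_v`: the ring of sets on `vΛ` generated by the tail sets. -/
def tailRing (C : CategoryOfPaths Λ) (w : Λ) : Set (Set Λ) :=
  setRingGenOn (pRng C w) {E | ∃ α, C.r α = w ∧ E = pTail C α}

/-- A directed subset. -/
def pDirected (C : CategoryOfPaths Λ) (x : Set Λ) : Prop :=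
  ∀ α ∈ x, ∀ β ∈ x, (pTail C α ∩ pTail C β ∩ x).Nonempty

/-- A hereditary subset. -/
def pHereditary (C : CategoryOfPaths Λ) (x : Set Λ) : Prop :=
  ∀ γ ∈ x, ∀ α : Λ, γ ∈ pTail C α → α ∈ x

/-- `vΛ*`: the nonempty directed hereditary subsets of `vΛ`. -/
def lamStar (C : CategoryOfPaths Λ) (w : Λ) : Set (Set Λ) :=
  {x | x.Nonempty ∧ x ⊆ pRng C w ∧ pDirected C x ∧ pHereditary C x}

/-- `vΛ**`: the maximal directed subsets of `vΛ`. -/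
def lamStarStar (C : CategoryOfPaths Λ) (w : Λ) : Set (Set Λ) :=
  {x | x ⊆ pRng C w ∧ pDirected C x ∧
    ∀ y, y ⊆ pRng C w → pDirected C y → x ⊆ y → y = x}

/-- `αx = ⋃_{γ ∈ x} [αγ]` for `x ∈ s(α)Λ*`. -/
def pMulStar (C : CategoryOfPaths Λ) (α : Λ) (x : Set Λ) : Set Λ :=
  {δ | ∃ γ ∈ x, C.s α = C.r γ ∧ C.comp α γ ∈ pTail C δ}

/-- `𝒰_{C,0}`. -/
def UC0 (C : CategoryOfPaths Λ) (w : Λ) (x : Set Λ) : Set (Set Λ) :=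
  {E | E ∈ tailRing C w ∧ ∃ α ∈ x, pTail C α ⊆ E}

/-- `𝒰_C`. -/
def UC (C : CategoryOfPaths Λ) (w : Λ) (x : Set Λ) : Set (Set Λ) :=
  {E | E ∈ tailRing C w ∧ ∃ α ∈ x, x ∩ pTail C α ⊆ E}

/-- `X_v = vΛ*` as a type. -/
abbrev Xv (C : CategoryOfPaths Λ) (w : Λ) : Type u := {x : Set Λ // x ∈ lamStar C w}

/-- The topology on `X_v` generated by the sets `Ê`, `E ∈ 𝒜_v`. -/
def XvTop (C : CategoryOfPaths Λ) (w : Λ) : TopologicalSpace (Xv C w) :=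
  TopologicalSpace.generateFrom
    {t | ∃ E ∈ tailRing C w, t = {x : Xv C w | E ∈ UC C w x.1}}

/-- The vertices of `Λ`. -/
abbrev Vertex (C : CategoryOfPaths Λ) : Type u := {w : Λ // C.r w = w}

/-- `X`: the disjoint union of the spaces `X_v`. -/
abbrev Xtotal (C : CategoryOfPaths Λ) : Type u := Σ w : Vertex C, Xv C w.1

/-- The disjoint union topology on `X`. -/
def XtotalTop (C : CategoryOfPaths Λ) : TopologicalSpace (Xtotal C) :=
  letI : ∀ w : Vertex C, TopologicalSpace (Xv C w.1) := fun w => XvTop C w.1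
  inferInstance

/-- The boundary `∂Λ`: the closure of `Λ**` in `X`. -/
def boundarySet (C : CategoryOfPaths Λ) : Set (Xtotal C) :=
  @closure _ (XtotalTop C) {p : Xtotal C | p.2.1 ∈ lamStarStar C p.1.1}

/-- An exhaustive subset of `vΛ`. -/
def ExhaustiveAt (C : CategoryOfPaths Λ) (w : Λ) (F : Set Λ) : Prop :=
  ∀ α, C.r α = w → ∃ β ∈ F, pMeets C α β

/-- An aperiodic point of `Λ*`. -/
def pAperiodic (C : CategoryOfPaths Λ) (x : Set Λ) : Prop :=
  ∀ α ∈ x, ∀ β ∈ x, α ≠ β → pShift C α x ≠ pShift C β x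

/-- A right-aperiodic point of `wΛ*`. -/
def pRightAperiodicAt (C : CategoryOfPaths Λ) (w : Λ) (x : Set Λ) : Prop :=
  ∀ α β : Λ, C.s α = w → C.s β = w → α ≠ β → pMulStar C α x ≠ pMulStar C β x

/-- The triples `(α, β, x)` with `s α = s β` and `x ∈ s(α)Λ*`. -/
abbrev pTrip (C : CategoryOfPaths Λ) : Type u :=
  {t : Λ × Λ × Set Λ // C.s t.1 = C.s t.2.1 ∧ t.2.2 ∈ lamStar C (C.s t.1)}

/-- The groupoid equivalence relation on triples. -/
def tripRel (C : CategoryOfPaths Λ) (t t' : pTrip C) : Prop :=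
  ∃ (z : Set Λ) (δ δ' : Λ),
    z ∈ lamStar C (C.s δ) ∧ z ∈ lamStar C (C.s δ') ∧
    C.s t.1.1 = C.r δ ∧ C.s t'.1.1 = C.r δ' ∧
    t.1.2.2 = pMulStar C δ z ∧ t'.1.2.2 = pMulStar C δ' z ∧
    C.comp t.1.1 δ = C.comp t'.1.1 δ' ∧
    C.comp t.1.2.1 δ = C.comp t'.1.2.1 δ'

/-- The ultrafilter space of `𝒜(Λ₀,Λ)_v`. -/
abbrev relXv (C : CategoryOfPaths Λ) (Λ₀ : Set Λ) (w : Λ) : Type u :=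
  {U : Set (Set Λ) // IsUltrafilterIn (relAring C Λ₀ Set.univ w) U}

/-- The topology on the ultrafilter space of `𝒜(Λ₀,Λ)_v` generated by the `Ê`. -/
def relXvTop (C : CategoryOfPaths Λ) (Λ₀ : Set Λ) (w : Λ) :
    TopologicalSpace (relXv C Λ₀ w) :=
  TopologicalSpace.generateFrom
    {t | ∃ E ∈ relAring C Λ₀ Set.univ w, t = {U : relXv C Λ₀ w | E ∈ U.1}}

/-!
Necessity: by finite alignment, `αΛ ∩ βΛ` is the finite union of the `εΛ`, `ε ∈ α ∨ β`.

Sufficiency: the condition makes `μ` monotone for the extension order, so the graph `M` of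
`⋃_{α ∈ F} αΛ ↦ ⨆_{α ∈ F} μ α` (`F ⊆ vΛ` finite) is well defined; it is a sublattice of
`Set Λ × R`, closed under `⊓` by the condition, on which the first coordinate controls the order
of the second. Finite suprema of differences `a \ b`, `a, b ∈ M`, form a generalized Boolean
subalgebra of `Set Λ × R`, and the order control passes to it by induction on the number of
differences, splitting `(a \ b) \ (c \ d) = a \ (b ⊔ c) ⊔ (a ⊓ d) \ b`. This subalgebra is
therefore the graph of a Boolean ring homomorphism on a ring containing `𝒜_v`.

Uniqueness: the sets on which two homomorphisms agree form a ring containing the tail sets.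
-/

theorem sdiff_sdiff_sdiff {α : Type*} [GeneralizedBooleanAlgebra α] (a b c d : α) :
    (a \ b) \ (c \ d) = a \ (b ⊔ c) ⊔ (a ⊓ d) \ b := by
  rw [sdiff_sdiff_right', sdiff_sdiff_left, sdiff_inf_right_comm]

theorem isLUB_insert_bot_image_iff {ι α : Type*} [SemilatticeSup α] [OrderBot α] (s : Finset ι)
    (f : ι → α) {x : α} : IsLUB (insert ⊥ (f '' s)) x ↔ s.sup f = x := by
  have h : IsLUB (insert ⊥ (f '' s)) (s.sup f) := by
    simpa using (Finset.isLUB_sup (s := s) (f := f)).insert ⊥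
  exact ⟨h.unique, fun hx => hx ▸ h⟩

theorem Finset.sup_inf_sup_eq_sup_biUnion {ι α : Type*} [DistribLattice α] [OrderBot α]
    [DecidableEq ι] (s t : Finset ι) (J : ι → ι → Finset ι) (f : ι → α)
    (h : ∀ a ∈ s, ∀ b ∈ t, f a ⊓ f b = (J a b).sup f) :
    s.sup f ⊓ t.sup f = ((s ×ˢ t).biUnion fun p => J p.1 p.2).sup f := by
  rw [Finset.sup_inf_sup, Finset.sup_biUnion]
  exact Finset.sup_congr rfl fun p hp => h p.1 (Finset.mem_product.mp hp).1 p.2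
    (Finset.mem_product.mp hp).2

theorem IsBRHomOn.map_finset_sup {γ ι R : Type*} [GeneralizedBooleanAlgebra R]
    {A : Set (Set γ)} {ν : Set γ → R} (hA : IsSetRing A) (hν : IsBRHomOn A ν) {s : Finset ι}
    {f : ι → Set γ} (hf : ∀ i ∈ s, f i ∈ A) : ν (s.sup f) = s.sup (ν ∘ f) := by
  classical
  induction s using Finset.induction_on with
  | empty => exact hν.1
  | insert i s _ ih =>
    have hs : ∀ j ∈ s, f j ∈ A := fun j hj => hf j (Finset.mem_insert_of_mem hj)
    rw [Finset.sup_insert, Finset.sup_insert, ← ih hs]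
    exact hν.2.1 _ (hf i (Finset.mem_insert_self i s)) _ (Finset.sup_mem A hA.1 hA.2.1 s f hs)

section SupDiff

variable {X : Type*} [GeneralizedBooleanAlgebra X] {M : Set X}

inductive IsSupDiff (M : Set X) : X → Prop
  | bot : IsSupDiff M ⊥
  | sdiff_sup {a b y : X} : a ∈ M → b ∈ M → IsSupDiff M y → IsSupDiff M (a \ b ⊔ y)

namespace IsSupDiff

theorem sdiff {a b : X} (ha : a ∈ M) (hb : b ∈ M) : IsSupDiff M (a \ b) := by
  simpa using sdiff_sup ha hb bot

theorem of_mem (hbot : ⊥ ∈ M) {a : X} (ha : a ∈ M) : IsSupDiff M a := by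
  simpa using sdiff ha hbot

theorem sup {x y : X} (hx : IsSupDiff M x) (hy : IsSupDiff M y) : IsSupDiff M (x ⊔ y) := by
  induction hx with
  | bot => simpa using hy
  | sdiff_sup ha hb _ ih => simpa only [sup_assoc] using sdiff_sup ha hb ih

theorem sdiff_sdiff (hM : IsSublattice M) {x c d : X} (hx : IsSupDiff M x) (hc : c ∈ M)
    (hd : d ∈ M) : IsSupDiff M (x \ (c \ d)) := by
  induction hx with
  | bot => simpa using bot
  | sdiff_sup ha hb _ ih =>
    rw [sup_sdiff, sdiff_sdiff_sdiff]
    exact ((sdiff ha (hM.supClosed hb hc)).sup (sdiff (hM.infClosed ha hd) hb)).sup ih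

theorem sdiff_right (hM : IsSublattice M) {x y : X} (hx : IsSupDiff M x) (hy : IsSupDiff M y) :
    IsSupDiff M (x \ y) := by
  induction hy generalizing x with
  | bot => simpa using hx
  | sdiff_sup hc hd _ ih => simpa only [sdiff_sdiff_left] using ih (hx.sdiff_sdiff hM hc hd)

theorem inf (hM : IsSublattice M) {x y : X} (hx : IsSupDiff M x) (hy : IsSupDiff M y) :
    IsSupDiff M (x ⊓ y) := by
  simpa only [sdiff_sdiff_right_self] using hx.sdiff_right hM (hx.sdiff_right hM hy)

end IsSupDiff

end SupDiff

section SupDiffProd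

variable {Y Z : Type*} [GeneralizedBooleanAlgebra Y] [GeneralizedBooleanAlgebra Z]
  {M : Set (Y × Z)}

theorem IsSupDiff.snd_sdiff_le (hM : IsSublattice M)
    (hmono : ∀ a ∈ M, ∀ b ∈ M, a.1 ≤ b.1 → a.2 ≤ b.2) {y : Y × Z} (hy : IsSupDiff M y) :
    ∀ {a b : Y × Z}, a ∈ M → b ∈ M → (a \ b).1 ≤ y.1 → (a \ b).2 ≤ y.2 := by
  induction hy with
  | bot =>
    intro a b ha hb h
    have hab : a.1 ≤ b.1 := sdiff_eq_bot_iff.mp (le_bot_iff.mp h)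
    exact (sdiff_eq_bot_iff.mpr (hmono a ha b hb hab)).le
  | @sdiff_sup c d y hc hd _ ih =>
    intro a b ha hb h
    have hsplit := sdiff_sdiff_sdiff a b c d
    have h1 : ((a \ b) \ (c \ d)).1 ≤ y.1 := sdiff_le_iff.mpr h
    rw [hsplit] at h1
    have h2 : ((a \ b) \ (c \ d)).2 ≤ y.2 := by
      rw [hsplit]
      exact sup_le (ih ha (hM.supClosed hb hc) (le_sup_left.trans h1))
        (ih (hM.infClosed ha hd) hb (le_sup_right.trans h1))
    exact sdiff_le_iff.mp h2

theorem IsSupDiff.snd_le_snd (hM : IsSublattice M)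
    (hmono : ∀ a ∈ M, ∀ b ∈ M, a.1 ≤ b.1 → a.2 ≤ b.2) {x y : Y × Z} (hx : IsSupDiff M x)
    (hy : IsSupDiff M y) (h : x.1 ≤ y.1) : x.2 ≤ y.2 := by
  induction hx with
  | bot => exact bot_le
  | sdiff_sup ha hb _ ih =>
    exact sup_le (hy.snd_sdiff_le hM hmono ha hb (le_sup_left.trans h))
      (ih (le_sup_right.trans h))

end SupDiffProd

section SetRing

variable {γ : Type*}

theorem IsSetRing.sInter {𝓕 : Set (Set (Set γ))} (h : ∀ R ∈ 𝓕, IsSetRing R) :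
    IsSetRing (⋂₀ 𝓕) :=
  ⟨fun R hR => (h R hR).1,
    fun _ hE _ hF R hR => (h R hR).2.1 _ (hE R hR) _ (hF R hR),
    fun _ hE _ hF R hR => (h R hR).2.2.1 _ (hE R hR) _ (hF R hR),
    fun _ hE _ hF R hR => (h R hR).2.2.2 _ (hE R hR) _ (hF R hR)⟩

theorem isSetRing_setRingGen (G : Set (Set γ)) : IsSetRing (setRingGen G) :=
  IsSetRing.sInter fun _ hR => hR.1

theorem subset_setRingGen (G : Set (Set γ)) : G ⊆ setRingGen G :=
  fun _ hE _ hR => hR.2 hE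

theorem setRingGen_subset {G R : Set (Set γ)} (hR : IsSetRing R) (hGR : G ⊆ R) :
    setRingGen G ⊆ R :=
  Set.sInter_subset_of_mem ⟨hR, hGR⟩

theorem isSetRing_setRingGenOn (S : Set γ) (G : Set (Set γ)) : IsSetRing (setRingGenOn S G) :=
  IsSetRing.sInter fun _ hR => hR.1.1

theorem subset_setRingGenOn (S : Set γ) (G : Set (Set γ)) : G ⊆ setRingGenOn S G :=
  fun _ hE _ hR => hR.2 hE

theorem setRingGenOn_subset {S : Set γ} {G R : Set (Set γ)} (hR : IsSetRing R) (hGR : G ⊆ R)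
    (hGS : ∀ E ∈ G, E ⊆ S) : setRingGenOn S G ⊆ R := by
  refine fun E hE => (hE (R ∩ {E | E ⊆ S}) ⟨⟨?_, fun _ h => h.2⟩, fun E h => ⟨hGR h, hGS E h⟩⟩).1
  obtain ⟨h0, hu, hi, hd⟩ := hR
  exact ⟨⟨h0, Set.empty_subset S⟩,
    fun E hE F hF => ⟨hu E hE.1 F hF.1, Set.union_subset hE.2 hF.2⟩,
    fun E hE F hF => ⟨hi E hE.1 F hF.1, Set.inter_subset_left.trans hE.2⟩,
    fun E hE F hF => ⟨hd E hE.1 F hF.1, Set.sdiff_subset.trans hE.2⟩⟩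

variable {R : Type*} [GeneralizedBooleanAlgebra R]

theorem IsBRHomOn.mono {A B : Set (Set γ)} {ν : Set γ → R} (h : IsBRHomOn A ν) (hBA : B ⊆ A) :
    IsBRHomOn B ν :=
  ⟨h.1, fun E hE F hF => h.2.1 E (hBA hE) F (hBA hF),
    fun E hE F hF => h.2.2.1 E (hBA hE) F (hBA hF),
    fun E hE F hF => h.2.2.2 E (hBA hE) F (hBA hF)⟩

theorem IsBRHomOn.eqOn_setRingGenOn {S : Set γ} {G : Set (Set γ)} (hGS : ∀ E ∈ G, E ⊆ S)
    {ν₁ ν₂ : Set γ → R} (h₁ : IsBRHomOn (setRingGenOn S G) ν₁)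
    (h₂ : IsBRHomOn (setRingGenOn S G) ν₂) (hG : Set.EqOn ν₁ ν₂ G) :
    Set.EqOn ν₁ ν₂ (setRingGenOn S G) := by
  obtain ⟨h0, hu, hi, hd⟩ := isSetRing_setRingGenOn S G
  refine fun E hE => (setRingGenOn_subset (R := {E | E ∈ setRingGenOn S G ∧ ν₁ E = ν₂ E})
    ⟨⟨h0, h₁.1.trans h₂.1.symm⟩, ?_, ?_, ?_⟩
    (fun E h => ⟨subset_setRingGenOn S G h, hG h⟩) hGS hE).2
  · rintro E ⟨hE, hE'⟩ F ⟨hF, hF'⟩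
    exact ⟨hu E hE F hF, by rw [h₁.2.1 E hE F hF, h₂.2.1 E hE F hF, hE', hF']⟩
  · rintro E ⟨hE, hE'⟩ F ⟨hF, hF'⟩
    exact ⟨hi E hE F hF, by rw [h₁.2.2.1 E hE F hF, h₂.2.2.1 E hE F hF, hE', hF']⟩
  · rintro E ⟨hE, hE'⟩ F ⟨hF, hF'⟩
    exact ⟨hd E hE F hF, by rw [h₁.2.2.2 E hE F hF, h₂.2.2.2 E hE F hF, hE', hF']⟩

theorem isSetRing_fst_isSupDiff {M : Set (Set γ × R)} (hM : IsSublattice M) :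
    IsSetRing {E | ∃ r, IsSupDiff M (E, r)} :=
  ⟨⟨⊥, IsSupDiff.bot⟩, fun _ ⟨r, hE⟩ _ ⟨t, hF⟩ => ⟨r ⊔ t, hE.sup hF⟩,
    fun _ ⟨r, hE⟩ _ ⟨t, hF⟩ => ⟨r ⊓ t, hE.inf hM hF⟩,
    fun _ ⟨r, hE⟩ _ ⟨t, hF⟩ => ⟨r \ t, hE.sdiff_right hM hF⟩⟩

theorem exists_isBRHomOn_of_graph {M : Set (Set γ × R)} (hM : IsSublattice M) (hbot : ⊥ ∈ M)
    (hmono : ∀ a ∈ M, ∀ b ∈ M, a.1 ⊆ b.1 → a.2 ≤ b.2) :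
    ∃ ν : Set γ → R, IsBRHomOn (setRingGen (Prod.fst '' M)) ν ∧ ∀ a ∈ M, ν a.1 = a.2 := by
  classical
  set ν : Set γ → R := fun E => if h : ∃ r, IsSupDiff M (E, r) then h.choose else ⊥
  have hν : ∀ {E r}, IsSupDiff M (E, r) → ν E = r := by
    intro E r h
    have hex : ∃ r, IsSupDiff M (E, r) := ⟨r, h⟩
    have hr := hex.choose_spec
    simp only [ν, dif_pos hex]
    exact le_antisymm (hr.snd_le_snd hM hmono h le_rfl) (h.snd_le_snd hM hmono hr le_rfl)
  have hring := isSetRing_fst_isSupDiff hM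
  have hsub : setRingGen (Prod.fst '' M) ⊆ {E | ∃ r, IsSupDiff M (E, r)} :=
    setRingGen_subset hring (by rintro _ ⟨a, ha, rfl⟩; exact ⟨a.2, IsSupDiff.of_mem hbot ha⟩)
  refine ⟨ν, IsBRHomOn.mono ⟨hν IsSupDiff.bot, ?_, ?_, ?_⟩ hsub,
    fun a ha => hν (IsSupDiff.of_mem hbot ha)⟩
  · rintro E ⟨r, hE⟩ F ⟨t, hF⟩
    rw [hν hE, hν hF]; exact hν (hE.sup hF)
  · rintro E ⟨r, hE⟩ F ⟨t, hF⟩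
    rw [hν hE, hν hF]; exact hν (hE.inf hM hF)
  · rintro E ⟨r, hE⟩ F ⟨t, hF⟩
    rw [hν hE, hν hF]; exact hν (hE.sdiff_right hM hF)

end SetRing

section Paths

variable {C : CategoryOfPaths Λ}

theorem mem_pTail_self (C : CategoryOfPaths Λ) (α : Λ) : α ∈ pTail C α :=
  ⟨C.s α, (C.r_s α).symm, (C.comp_id α).symm⟩

theorem r_eq_of_mem_pTail {α x : Λ} (h : x ∈ pTail C α) : C.r x = C.r α := by
  obtain ⟨β, hβ, rfl⟩ := h
  exact C.r_comp hβ

theorem pTail_subset_pRng {α v : Λ} (h : C.r α = v) : pTail C α ⊆ pRng C v :=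
  fun _ hx => (r_eq_of_mem_pTail hx).trans h

theorem pTail_subset_pTail {α x : Λ} (h : x ∈ pTail C α) : pTail C x ⊆ pTail C α := by
  obtain ⟨β, hβ, rfl⟩ := h
  rintro _ ⟨δ, hδ, rfl⟩
  have hβδ : C.s β = C.r δ := (C.s_comp hβ).symm.trans hδ
  exact ⟨C.comp β δ, hβ.trans (C.r_comp hβδ).symm, C.comp_assoc hβ hβδ⟩

theorem eq_of_mem_pTail_of_mem_pTail {α β : Λ} (h₁ : α ∈ pTail C β) (h₂ : β ∈ pTail C α) :
    α = β := by
  obtain ⟨b, hb, rfl⟩ := h₁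
  obtain ⟨a, ha, hba⟩ := h₂
  have hsb : C.s b = C.r a := (C.s_comp hb).symm.trans ha
  -- cancelling `β` in `β (b a) = β` makes `b a` an identity, so `b` is one since there are no
  -- inverses
  have hβ : C.comp β (C.comp b a) = C.comp β (C.s β) := by
    rw [← C.comp_assoc hb hsb, ← hba, C.comp_id]
  have hba_id : C.comp b a = C.s β :=
    C.left_cancel (by rw [C.r_comp hsb]; exact hb) (C.r_s β).symm hβ
  have hsa : C.s a = C.s β := by rw [hba, C.s_comp ha]
  rw [(C.no_inverses hsb (hba_id.trans hsa.symm)).1, hsa, C.comp_id]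

theorem mem_pMinCE_iff {α β ε : Λ} :
    ε ∈ pMinCE C α β ↔ (ε ∈ pTail C α ∧ ε ∈ pTail C β) ∧
      ∀ γ, γ ∈ pTail C α → γ ∈ pTail C β → ε ∈ pTail C γ → γ = ε := by
  simp only [pMinCE, pMinExt, Set.mem_ofPred_eq, Set.mem_insert_iff, Set.mem_singleton_iff,
    forall_eq_or_imp, forall_eq, and_imp]

theorem mem_pMinCE_self {α β : Λ} (h : α ∈ pTail C β) : α ∈ pMinCE C α β :=
  mem_pMinCE_iff.mpr ⟨⟨mem_pTail_self C α, h⟩, fun _ h₁ _ h₂ => eq_of_mem_pTail_of_mem_pTail h₁ h₂⟩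

theorem exists_minimal_pTail {H : Set Λ} (hfin : H.Finite) (hne : H.Nonempty) :
    ∃ ε ∈ H, ∀ z ∈ H, ε ∈ pTail C z → z = ε := by
  let _ : Preorder Λ :=
    { le := fun x y => y ∈ pTail C x
      le_refl := mem_pTail_self C
      le_trans := fun _ _ _ h₁ h₂ => pTail_subset_pTail h₁ h₂ }
  obtain ⟨ε, hε⟩ := hfin.exists_minimal hne
  exact ⟨ε, hε.prop, fun z hz h => eq_of_mem_pTail_of_mem_pTail (hε.2 hz h) h⟩

section Cover

variable {α β : Λ} {G : Set Λ} (hG : pTail C α ∩ pTail C β = ⋃ ε ∈ G, pTail C ε)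
include hG

theorem pMinCE_subset_of_eq_biUnion : pMinCE C α β ⊆ G := by
  intro ε hε
  have hεG : ε ∈ ⋃ ε ∈ G, pTail C ε := hG ▸ (mem_pMinCE_iff.mp hε).1
  obtain ⟨ε', hε'G, hεε'⟩ := Set.mem_iUnion₂.mp hεG
  have hε' : ε' ∈ pTail C α ∩ pTail C β := hG ▸ Set.mem_biUnion hε'G (mem_pTail_self C ε')
  rwa [← (mem_pMinCE_iff.mp hε).2 ε' hε'.1 hε'.2 hεε']

theorem mem_pMinCE_of_minimal {δ ε : Λ} (hεG : ε ∈ G) (hδ : δ ∈ pTail C ε)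
    (hmin : ∀ z ∈ G, δ ∈ pTail C z → ε ∈ pTail C z → z = ε) : ε ∈ pMinCE C α β := by
  have hε : ε ∈ pTail C α ∩ pTail C β := hG ▸ Set.mem_biUnion hεG (mem_pTail_self C ε)
  refine mem_pMinCE_iff.mpr ⟨hε, fun γ hγα hγβ hεγ => ?_⟩
  obtain ⟨ε₁, hε₁G, hγε₁⟩ := Set.mem_iUnion₂.mp (hG ▸ ⟨hγα, hγβ⟩ : γ ∈ ⋃ ε ∈ G, pTail C ε)
  have hεε₁ : ε ∈ pTail C ε₁ := pTail_subset_pTail hγε₁ hεγ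
  have hε₁ := hmin ε₁ hε₁G (pTail_subset_pTail hεε₁ hδ) hεε₁
  exact eq_of_mem_pTail_of_mem_pTail (hε₁ ▸ hγε₁) hεγ

theorem pTail_inter_pTail_eq_biUnion_pMinCE (hGfin : G.Finite) :
    pTail C α ∩ pTail C β = ⋃ ε ∈ pMinCE C α β, pTail C ε := by
  refine subset_antisymm (fun δ hδ => ?_) (Set.iUnion₂_subset fun ε hε => ?_)
  · obtain ⟨ε₀, hε₀G, hδε₀⟩ := Set.mem_iUnion₂.mp (hG ▸ hδ : δ ∈ ⋃ ε ∈ G, pTail C ε)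
    obtain ⟨ε, ⟨hεG, hδε⟩, hmin⟩ := exists_minimal_pTail (C := C)
      (hGfin.subset fun _ h => h.1 : {ε | ε ∈ G ∧ δ ∈ pTail C ε}.Finite) ⟨ε₀, hε₀G, hδε₀⟩
    exact Set.mem_biUnion (mem_pMinCE_of_minimal hG hεG hδε fun z hz hδz => hmin z ⟨hz, hδz⟩)
      hδε
  · obtain ⟨⟨hεα, hεβ⟩, -⟩ := mem_pMinCE_iff.mp hε
    exact Set.subset_inter (pTail_subset_pTail hεα) (pTail_subset_pTail hεβ)

end Cover

variable (hfa : FinitelyAligned C)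
include hfa

theorem finite_pMinCE (α β : Λ) : (pMinCE C α β).Finite :=
  let ⟨_, hGfin, hG⟩ := hfa α β
  hGfin.subset (pMinCE_subset_of_eq_biUnion hG)

noncomputable def pMinCEFinset (α β : Λ) : Finset Λ := (finite_pMinCE hfa α β).toFinset

theorem pTail_inter_pTail_eq_sup (α β : Λ) :
    pTail C α ∩ pTail C β = (pMinCEFinset hfa α β).sup (pTail C) := by
  obtain ⟨_, hGfin, hG⟩ := hfa α β
  rw [Finset.sup_set_eq_biUnion, pTail_inter_pTail_eq_biUnion_pMinCE hG hGfin]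
  simp [pMinCEFinset]

theorem r_eq_of_mem_pMinCEFinset {α β ε : Λ} (h : ε ∈ pMinCEFinset hfa α β) : C.r ε = C.r α :=
  r_eq_of_mem_pTail (mem_pMinCE_iff.mp ((finite_pMinCE hfa α β).mem_toFinset.mp h)).1.1

end Paths

section TailGraph

variable {R : Type*} [GeneralizedBooleanAlgebra R] {C : CategoryOfPaths Λ} {v : Λ} {μ : Λ → R}

def tailGraph (C : CategoryOfPaths Λ) (v : Λ) (μ : Λ → R) : Set (Set Λ × R) :=
  {x | ∃ F : Finset Λ, (∀ α ∈ F, C.r α = v) ∧ (F.sup (pTail C), F.sup μ) = x}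

theorem bot_mem_tailGraph : ⊥ ∈ tailGraph C v μ :=
  ⟨∅, by simp, rfl⟩

theorem tailRing_generators_subset_pRng :
    ∀ E ∈ {E | ∃ α, C.r α = v ∧ E = pTail C α}, E ⊆ pRng C v := by
  rintro _ ⟨α, hα, rfl⟩
  exact pTail_subset_pRng hα

theorem tailRing_subset_setRingGen_tailGraph :
    tailRing C v ⊆ setRingGen (Prod.fst '' tailGraph C v μ) := by
  refine setRingGenOn_subset (isSetRing_setRingGen _) ?_ tailRing_generators_subset_pRng
  rintro _ ⟨α, hα, rfl⟩
  exact subset_setRingGen _ ⟨_, ⟨{α}, by simpa using hα, rfl⟩, Finset.sup_singleton⟩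

theorem isLUB_iff_sup_pMinCEFinset (hfa : FinitelyAligned C) {α β : Λ} {x : R} :
    IsLUB (insert ⊥ (μ '' pMinCE C α β)) x ↔ (pMinCEFinset hfa α β).sup μ = x := by
  rw [← isLUB_insert_bot_image_iff, pMinCEFinset, Set.Finite.coe_toFinset]

theorem isLUB_of_isBRHomOn (hfa : FinitelyAligned C) {ν : Set Λ → R}
    (hν : IsBRHomOn (tailRing C v) ν) (hνμ : ∀ α : Λ, C.r α = v → ν (pTail C α) = μ α)
    {α β : Λ} (hα : C.r α = v) (hβ : C.r β = v) :
    IsLUB (insert ⊥ (μ '' pMinCE C α β)) (μ α ⊓ μ β) := by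
  have hmem : ∀ γ, C.r γ = v → pTail C γ ∈ tailRing C v := fun γ hγ =>
    subset_setRingGenOn _ _ ⟨γ, hγ, rfl⟩
  have hgood : ∀ ε ∈ pMinCEFinset hfa α β, C.r ε = v := fun ε hε =>
    (r_eq_of_mem_pMinCEFinset hfa hε).trans hα
  rw [isLUB_iff_sup_pMinCEFinset hfa, ← hνμ α hα, ← hνμ β hβ,
    ← hν.2.2.1 _ (hmem α hα) _ (hmem β hβ), pTail_inter_pTail_eq_sup hfa,
    hν.map_finset_sup (isSetRing_setRingGenOn _ _) fun ε hε => hmem ε (hgood ε hε)]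
  exact Finset.sup_congr rfl fun ε hε => (hνμ ε (hgood ε hε)).symm

variable (hμ : ∀ α β : Λ, C.r α = v → C.r β = v →
  IsLUB (insert ⊥ (μ '' pMinCE C α β)) (μ α ⊓ μ β))
include hμ

theorem le_of_mem_pTail {α β : Λ} (hβ : C.r β = v) (h : α ∈ pTail C β) : μ α ≤ μ β :=
  ((hμ α β ((r_eq_of_mem_pTail h).trans hβ) hβ).1
    (Set.mem_insert_of_mem _ ⟨α, mem_pMinCE_self h, rfl⟩)).trans inf_le_right

theorem sup_le_sup_of_sup_pTail_subset {F G : Finset Λ} (hG : ∀ β ∈ G, C.r β = v)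
    (h : F.sup (pTail C) ⊆ G.sup (pTail C)) : F.sup μ ≤ G.sup μ := by
  refine Finset.sup_le fun α hα => ?_
  have hαG := h (Finset.le_sup (f := pTail C) hα (mem_pTail_self C α))
  rw [Finset.sup_set_eq_biUnion] at hαG
  obtain ⟨β, hβG, hαβ⟩ := Set.mem_iUnion₂.mp hαG
  exact (le_of_mem_pTail hμ (hG β hβG) hαβ).trans (Finset.le_sup hβG)

variable (hfa : FinitelyAligned C)
include hfa

theorem sup_pMinCEFinset {α β : Λ} (hα : C.r α = v) (hβ : C.r β = v) :
    (pMinCEFinset hfa α β).sup μ = μ α ⊓ μ β :=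
  (isLUB_iff_sup_pMinCEFinset hfa).mp (hμ α β hα hβ)

theorem isSublattice_tailGraph : IsSublattice (tailGraph C v μ) := by
  classical
  constructor
  · rintro _ ⟨F, hF, rfl⟩ _ ⟨G, hG, rfl⟩
    refine ⟨F ∪ G, fun α hα => ?_, by simp [Finset.sup_union]⟩
    rcases Finset.mem_union.mp hα with hα | hα
    exacts [hF α hα, hG α hα]
  · rintro _ ⟨F, hF, rfl⟩ _ ⟨G, hG, rfl⟩
    refine ⟨(F ×ˢ G).biUnion fun p => pMinCEFinset hfa p.1 p.2, ?_, ?_⟩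
    · intro ε hε
      obtain ⟨p, hp, hεp⟩ := Finset.mem_biUnion.mp hε
      exact (r_eq_of_mem_pMinCEFinset hfa hεp).trans (hF p.1 (Finset.mem_product.mp hp).1)
    · rw [Prod.mk_inf_mk,
        Finset.sup_inf_sup_eq_sup_biUnion F G _ _ fun α _ β _ => pTail_inter_pTail_eq_sup hfa α β,
        Finset.sup_inf_sup_eq_sup_biUnion F G _ _ fun α hα β hβ =>
          (sup_pMinCEFinset hμ hfa (hF α hα) (hG β hβ)).symm]

end TailGraph

theorem statement8_general {Λ : Type u} (C : CategoryOfPaths Λ) (hfa : FinitelyAligned C)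
    (v : Λ) {R : Type*} [GeneralizedBooleanAlgebra R] (μ : Λ → R) :
    ((∃ ν : Set Λ → R, IsBRHomOn (tailRing C v) ν ∧
        ∀ α : Λ, C.r α = v → ν (pTail C α) = μ α) ↔
      (∀ α β : Λ, C.r α = v → C.r β = v →
        IsLUB (insert ⊥ (μ '' pMinCE C α β)) (μ α ⊓ μ β))) ∧
    (∀ ν₁ ν₂ : Set Λ → R, IsBRHomOn (tailRing C v) ν₁ → IsBRHomOn (tailRing C v) ν₂ →
      (∀ α : Λ, C.r α = v → ν₁ (pTail C α) = μ α) →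
      (∀ α : Λ, C.r α = v → ν₂ (pTail C α) = μ α) →
      ∀ E ∈ tailRing C v, ν₁ E = ν₂ E) := by
  refine ⟨⟨fun ⟨ν, hν, hνμ⟩ α β hα hβ => isLUB_of_isBRHomOn hfa hν hνμ hα hβ, fun hμ => ?_⟩,
    fun ν₁ ν₂ h₁ h₂ hμ₁ hμ₂ => IsBRHomOn.eqOn_setRingGenOn tailRing_generators_subset_pRng h₁ h₂ ?_⟩
  · obtain ⟨ν, hν, hνM⟩ := exists_isBRHomOn_of_graph (isSublattice_tailGraph hμ hfa)
      bot_mem_tailGraph (by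
        rintro _ ⟨F, -, rfl⟩ _ ⟨G, hG, rfl⟩ h
        exact sup_le_sup_of_sup_pTail_subset hμ hG h)
    refine ⟨ν, hν.mono tailRing_subset_setRingGen_tailGraph, fun α hα => ?_⟩
    simpa using hνM _ ⟨{α}, by simpa using hα, rfl⟩
  · rintro _ ⟨α, hα, rfl⟩
    rw [hμ₁ α hα, hμ₂ α hα]

/-- Theorem 5.9. For a finitely aligned category of paths, a
map `μ : vΛ → R` extends (uniquely) to a Boolean ring homomorphism
`𝒜_v → R` with `μ̄(αΛ) = μ(α)` iff `μ(α) ⊓ μ(β) = ⨆_{ε ∈ α∨β} μ(ε)` for all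
`α, β ∈ vΛ`. -/
theorem statement8 {Λ : Type u} (C : CategoryOfPaths Λ) (hfa : FinitelyAligned C)
    (v : Λ) (hv : C.r v = v) {R : Type*} [GeneralizedBooleanAlgebra R] (μ : Λ → R) :
    ((∃ ν : Set Λ → R, IsBRHomOn (tailRing C v) ν ∧
        ∀ α : Λ, C.r α = v → ν (pTail C α) = μ α) ↔
      (∀ α β : Λ, C.r α = v → C.r β = v →
        IsLUB (insert ⊥ (μ '' pMinCE C α β)) (μ α ⊓ μ β))) ∧
    (∀ ν₁ ν₂ : Set Λ → R, IsBRHomOn (tailRing C v) ν₁ → IsBRHomOn (tailRing C v) ν₂ →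
      (∀ α : Λ, C.r α = v → ν₁ (pTail C α) = μ α) →
      (∀ α : Λ, C.r α = v → ν₂ (pTail C α) = μ α) →
      ∀ E ∈ tailRing C v, ν₁ E = ν₂ E) :=
  statement8_general C hfa v μ
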